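/- arXiv:2203.10031 — 4 statements merged into one kernel-verified Lean document; each statement's English description precedes it below -/
import Mathlib

section
/- Let n ≥ 1 and k ≥ 1 be integers, let y ∈ ℝⁿ with |y| = 1, and let Y be Brendle's vector field. Then Y is tangent to the unit sphere away from y: for every x ∈ ℝⁿ with |x| = 1 and x ≠ y, one has ⟨Y(x), x⟩ = 0. -/
/-!
Since `d/dt ‖t • x - y‖ ^ (2 - k) = (2 - k) ⟪x, (t • x - y) / ‖t • x - y‖ ^ k⟫`, the fundamental
theorem of calculus gives `(k - 2) ⟪∫₀¹ (t • x - y) / ‖t • x - y‖ ^ k dt, x⟫ =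
‖y‖ ^ (2 - k) - ‖x - y‖ ^ (2 - k)` for every `k`, with no case split at `k = 2`. On the unit
sphere `⟪x - y, x⟫ = ‖x - y‖ ^ 2 / 2`, so with `a = ‖x - y‖ ^ (2 - k)` we get
`⟪Y x, x⟫ = 1/2 - a/2 - (1 - a)/2 = 0`.
-/

open Metric Set

/-- Brendle's vector field `Y(x) = x/2 − (x−y)/|x−y|^k − ((k−2)/2)·∫₀¹ (t·x − y)/|t·x − y|^k dt`. -/
noncomputable def brendleY (n k : ℕ) (y : EuclideanSpace ℝ (Fin n)) :
    EuclideanSpace ℝ (Fin n) → EuclideanSpace ℝ (Fin n) := fun x =>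
  (2 : ℝ)⁻¹ • x - (‖x - y‖ ^ k)⁻¹ • (x - y) -
    (((k : ℝ) - 2) / 2) • ∫ t in (0 : ℝ)..1, (‖t • x - y‖ ^ k)⁻¹ • (t • x - y)

open scoped RealInnerProductSpace

section InnerProductSpace

variable {E : Type*} [NormedAddCommGroup E] [InnerProductSpace ℝ E]

theorem HasDerivAt.norm {f : ℝ → E} {f' : E} {t : ℝ} (hf : HasDerivAt f f' t) (h0 : f t ≠ 0) :
    HasDerivAt (fun s => ‖f s‖) (⟪f t, f'⟫ / ‖f t‖) t := by
  have hsq : ‖f t‖ ^ 2 ≠ 0 := by positivity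
  convert hf.norm_sq.sqrt hsq using 1
  · simp only [Real.sqrt_sq (norm_nonneg _)]
  · rw [Real.sqrt_sq (norm_nonneg _)]
    ring

theorem HasDerivAt.norm_zpow {f : ℝ → E} {f' : E} {t : ℝ} (hf : HasDerivAt f f' t)
    (h0 : f t ≠ 0) (m : ℤ) :
    HasDerivAt (fun s => ‖f s‖ ^ m) (m * ‖f t‖ ^ (m - 2) * ⟪f t, f'⟫) t := by
  have hpos : ‖f t‖ ≠ 0 := norm_ne_zero_iff.mpr h0
  refine ((hasDerivAt_zpow m _ (Or.inl hpos)).comp t (hf.norm h0)).congr_deriv ?_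
  rw [zpow_sub₀ hpos m 2, zpow_sub_one₀ hpos]
  field_simp

theorem smul_ne_of_norm_le_of_ne {x y : E} (hnorm : ‖x‖ ≤ ‖y‖) (hxy : x ≠ y) {t : ℝ}
    (ht : t ∈ Icc (0 : ℝ) 1) : t • x ≠ y := by
  rintro rfl
  rw [norm_smul, Real.norm_of_nonneg ht.1] at hnorm
  rcases eq_or_lt_of_le ht.2 with rfl | ht1
  · exact hxy (one_smul ℝ x).symm
  · have hx : ‖x‖ = 0 := by nlinarith [norm_nonneg x, ht.1]
    rw [norm_eq_zero] at hx
    simp [hx] at hxy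

theorem inner_sub_left_self_of_norm_eq {x y : E} (h : ‖x‖ = ‖y‖) :
    ⟪x - y, x⟫ = ‖x - y‖ ^ 2 / 2 := by
  rw [norm_sub_sq_real, inner_sub_left, real_inner_self_eq_norm_sq, real_inner_comm, h]
  ring

theorem continuousOn_inv_norm_pow_smul {x y : E} (k : ℕ) {s : Set ℝ}
    (hs : ∀ t ∈ s, t • x ≠ y) :
    ContinuousOn (fun t : ℝ => (‖t • x - y‖ ^ k)⁻¹ • (t • x - y)) s := by
  refine ContinuousOn.smul ?_ (by fun_prop)
  refine ContinuousOn.inv₀ (by fun_prop) fun t ht => ?_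
  exact pow_ne_zero _ (norm_ne_zero_iff.mpr (sub_ne_zero.mpr (hs t ht)))

theorem two_sub_mul_inner_integral_inv_norm_pow_smul [CompleteSpace E] (k : ℕ) {x y : E}
    (hseg : ∀ t ∈ Icc (0 : ℝ) 1, t • x ≠ y) :
    (2 - k : ℝ) * ⟪∫ t in (0 : ℝ)..1, (‖t • x - y‖ ^ k)⁻¹ • (t • x - y), x⟫ =
      ‖x - y‖ ^ (2 - k : ℤ) - ‖y‖ ^ (2 - k : ℤ) := by
  have hcont := continuousOn_inv_norm_pow_smul k hseg
  have hderiv : ∀ t ∈ uIcc (0 : ℝ) 1, HasDerivAt (fun s : ℝ => ‖s • x - y‖ ^ (2 - k : ℤ))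
      ((2 - k : ℝ) * ⟪x, (‖t • x - y‖ ^ k)⁻¹ • (t • x - y)⟫) t := by
    intro t ht
    rw [uIcc_of_le zero_le_one] at ht
    refine (((hasDerivAt_id t).smul_const x).sub_const y |>.norm_zpow
      (sub_ne_zero.mpr (hseg t ht)) (2 - k)).congr_deriv ?_
    simp only [id, one_smul, real_inner_smul_right, real_inner_comm x, Int.cast_sub,
      Int.cast_ofNat, Int.cast_natCast, sub_sub_cancel_left, zpow_neg, zpow_natCast]
    ring
  have hcomm := (innerSL ℝ x).intervalIntegral_comp_comm
    (hcont.intervalIntegrable_of_Icc (μ := MeasureTheory.volume) zero_le_one)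
  simp only [innerSL_apply_apply] at hcomm
  rw [real_inner_comm, ← hcomm, ← intervalIntegral.integral_const_mul,
    intervalIntegral.integral_eq_sub_of_hasDerivAt hderiv]
  · simp
  · exact ((continuousOn_const.inner hcont).const_smul (2 - k : ℝ)).intervalIntegrable_of_Icc
      zero_le_one

end InnerProductSpace

theorem brendleY_tangent_sphere_general (n k : ℕ)
    (y : EuclideanSpace ℝ (Fin n)) (hy : ‖y‖ = 1)
    (x : EuclideanSpace ℝ (Fin n)) (hx : ‖x‖ = 1) (hxy : x ≠ y) :
    (inner ℝ (brendleY n k y x) x : ℝ) = 0 := by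
  have hseg : ∀ t ∈ Icc (0 : ℝ) 1, t • x ≠ y := fun _ =>
    smul_ne_of_norm_le_of_ne (hx.trans hy.symm).le hxy
  have hint := two_sub_mul_inner_integral_inv_norm_pow_smul k hseg
  have hd : ‖x - y‖ ≠ 0 := norm_ne_zero_iff.mpr (sub_ne_zero.mpr hxy)
  rw [hy, one_zpow, zpow_sub₀ hd, zpow_ofNat, zpow_natCast] at hint
  simp only [brendleY, inner_sub_left, real_inner_smul_left, real_inner_self_eq_norm_sq, hx,
    inner_sub_left_self_of_norm_eq (hx.trans hy.symm)]
  linear_combination hint / 2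

/-- Lemma (Brendle, (ii)): `Y` is tangent to the unit sphere away from `y`. -/
theorem brendleY_tangent_sphere (n k : ℕ) (hn : 1 ≤ n) (hk : 1 ≤ k)
    (y : EuclideanSpace ℝ (Fin n)) (hy : ‖y‖ = 1)
    (x : EuclideanSpace ℝ (Fin n)) (hx : ‖x‖ = 1) (hxy : x ≠ y) :
    (inner ℝ (brendleY n k y x) x : ℝ) = 0 :=
  brendleY_tangent_sphere_general n k y hy x hx hxy
end

section
/- Let n ≥ 1 and k ≥ 1 be integers. There exists a non-decreasing function h : [0,2] → [0,∞) with lim_{t→0⁺} h(t) = 0 such that for every y ∈ ℝⁿ with |y| = 1 and every x in the closed unit ball with x ≠ y, Brendle's vector field Y satisfies | Y(x) + (x−y)/|x−y|^k | ≤ h(|x−y|)/|x−y|^{k−1}. -/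
open Metric Set Filter

/-!
Write `d = |x - y|` and `I = ∫₀¹ (t x - y)/|t x - y|^k dt`, so that
`Y(x) + (x - y)/d^k = x/2 - ((k - 2)/2) I`. On the segment, `|t x - y| ≥ (d + 1 - t)/3`.
For `k ≥ 2` this gives `(k - 2)|I| ≤ 3^(k-1) d^(2-k)`, so the error is `O(d)/d^(k-1)`.
For `k = 1` the coefficient is `-1/2` and the integrand is the unit vector of `t x - y`; it differs
from `-y`, the unit vector of `(t - 1) y`, by at most `2 min(1, d/(1 - t)) ≤ 2 √(d/(1 - t))`, so
`|I + y| ≤ 4 √d`. Hence `h(s) = 3^k √s` works.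
-/

open NormedSpace MeasureTheory

lemma le_two_mul_sqrt {d : ℝ} (h0 : 0 ≤ d) (h4 : d ≤ 4) : d ≤ 2 * √d := by
  have hsqrt : √d ≤ 2 := Real.sqrt_le_iff.mpr ⟨zero_le_two, by norm_num [h4]⟩
  calc d = √d * √d := (Real.mul_self_sqrt h0).symm
    _ ≤ 2 * √d := by gcongr

lemma norm_sub_le_two {E : Type*} [SeminormedAddGroup E] {x y : E} (hx : ‖x‖ ≤ 1)
    (hy : ‖y‖ ≤ 1) : ‖x - y‖ ≤ 2 := by
  linarith [norm_sub_le x y]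

lemma sub_one_mul_integral_inv_pow_le {a b : ℝ} (ha : 0 < a) (hab : a ≤ b) {m : ℕ} (hm : 1 ≤ m) :
    ((m : ℝ) - 1) * ∫ s in a..b, (s ^ m)⁻¹ ≤ (a ^ (m - 1))⁻¹ := by
  obtain rfl | hm2 := hm.eq_or_lt
  · simp
  have hzero : (0 : ℝ) ∉ uIcc a b := by
    rw [uIcc_of_le hab]; exact fun h => ha.not_ge h.1
  have hm1 : (m : ℝ) - 1 ≠ 0 := by
    have : (2 : ℝ) ≤ m := by exact_mod_cast hm2
    linarith
  have hint : ∫ s in a..b, (s ^ m)⁻¹ =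
      (b ^ (-(m : ℤ) + 1) - a ^ (-(m : ℤ) + 1)) / (-(m : ℤ) + 1) := by
    simp_rw [← zpow_natCast, ← zpow_neg]
    exact_mod_cast integral_zpow (n := -(m : ℤ)) (Or.inr ⟨by omega, hzero⟩)
  have hexp : -(m : ℤ) + 1 = -((m - 1 : ℕ) : ℤ) := by omega
  have hb : 0 ≤ (b ^ (m - 1))⁻¹ := by have := ha.trans_le hab; positivity
  rw [hint, hexp, zpow_neg, zpow_neg, zpow_natCast, zpow_natCast]
  rw [show ((m : ℝ) - 1) * (((b ^ (m - 1))⁻¹ - (a ^ (m - 1))⁻¹) / (-((m : ℤ) : ℝ) + 1)) =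
      (a ^ (m - 1))⁻¹ - (b ^ (m - 1))⁻¹ by
    push_cast
    rw [show -(m : ℝ) + 1 = -((m : ℝ) - 1) by ring]
    field_simp
    ring]
  linarith

lemma intervalIntegrable_one_sub_rpow_neg_half :
    IntervalIntegrable (fun t : ℝ => (1 - t) ^ (-(1 / 2) : ℝ)) volume 0 1 := by
  have h := intervalIntegral.intervalIntegrable_rpow' (a := 0) (b := 1)
    (by norm_num : (-1 : ℝ) < -(1 / 2))
  simpa using (h.comp_sub_left 1).symm

lemma integral_one_sub_rpow_neg_half : ∫ t in (0 : ℝ)..1, (1 - t) ^ (-(1 / 2) : ℝ) = 2 := by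
  rw [intervalIntegral.integral_comp_sub_left (fun s : ℝ => s ^ (-(1 / 2) : ℝ)) 1]
  norm_num [integral_rpow]

section NormedSpace

variable {E : Type*} [NormedAddCommGroup E] [NormedSpace ℝ E]

lemma norm_normalize_le_one (b : E) : ‖normalize b‖ ≤ 1 := by
  rcases eq_or_ne b 0 with rfl | hb
  · simp
  · exact (norm_normalize_eq_one_iff.mpr hb).le

lemma norm_normalize_sub_normalize_le {a : E} (ha : a ≠ 0) (b : E) :
    ‖normalize a - normalize b‖ ≤ 2 * ‖a - b‖ / ‖a‖ := by
  have ha' : 0 < ‖a‖ := norm_pos_iff.mpr ha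
  have hdecomp : normalize a - normalize b
      = ‖a‖⁻¹ • ((a - b) + (‖b‖ - ‖a‖) • normalize b) := by
    rw [sub_smul, norm_smul_normalize, sub_add_sub_cancel, smul_sub, smul_smul,
      inv_mul_cancel₀ ha'.ne', one_smul, NormedSpace.normalize]
  have hnorm : |‖b‖ - ‖a‖| * ‖normalize b‖ ≤ ‖a - b‖ := by
    calc |‖b‖ - ‖a‖| * ‖normalize b‖ ≤ |‖b‖ - ‖a‖| * 1 := by
          gcongr; exact norm_normalize_le_one b
      _ ≤ ‖a - b‖ := by rw [mul_one, abs_sub_comm]; exact abs_norm_sub_norm_le a b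
  rw [hdecomp, norm_smul, norm_inv, norm_norm, inv_mul_eq_div]
  gcongr
  calc ‖a - b + (‖b‖ - ‖a‖) • normalize b‖
      ≤ ‖a - b‖ + |‖b‖ - ‖a‖| * ‖normalize b‖ := by
        rw [← Real.norm_eq_abs, ← norm_smul]; exact norm_add_le _ _
    _ ≤ 2 * ‖a - b‖ := by linarith

lemma norm_normalize_sub_normalize_le_sqrt {a : E} (ha : a ≠ 0) (b : E) :
    ‖normalize a - normalize b‖ ≤ 2 * √(‖a - b‖ / ‖a‖) := by
  set r := ‖a - b‖ / ‖a‖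
  rcases le_total r 1 with hr | hr
  · calc ‖normalize a - normalize b‖ ≤ 2 * r := by
          rw [mul_div_assoc']; exact norm_normalize_sub_normalize_le ha b
      _ ≤ 2 * √r := by
          have : 0 ≤ r := by positivity
          gcongr; exact Real.le_sqrt_of_sq_le (by nlinarith)
  · calc ‖normalize a - normalize b‖ ≤ ‖normalize a‖ + ‖normalize b‖ := norm_sub_le _ _
      _ ≤ 2 * 1 := by linarith [norm_normalize_le_one a, norm_normalize_le_one b]
      _ ≤ 2 * √r := by gcongr; exact Real.one_le_sqrt.mpr hr

lemma norm_inv_norm_pow_smul {a : E} (ha : a ≠ 0) {k : ℕ} (hk : 1 ≤ k) :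
    ‖(‖a‖ ^ k)⁻¹ • a‖ = (‖a‖ ^ (k - 1))⁻¹ := by
  have ha' : ‖a‖ ≠ 0 := norm_ne_zero_iff.mpr ha
  rw [norm_smul, norm_inv, norm_pow, norm_norm, ← Nat.sub_add_cancel hk, pow_succ,
    Nat.add_sub_cancel, mul_inv, mul_assoc, inv_mul_cancel₀ ha', mul_one]

variable {x y : E} {t : ℝ}

lemma one_sub_le_norm_smul_sub (hx : ‖x‖ ≤ 1) (hy : ‖y‖ = 1) (ht : 0 ≤ t) :
    1 - t ≤ ‖t • x - y‖ := by
  have htx : ‖t • x‖ ≤ t := by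
    rw [norm_smul, Real.norm_of_nonneg ht]; nlinarith
  have := norm_sub_norm_le y (t • x)
  rw [norm_sub_rev] at this
  linarith

lemma norm_sub_add_one_sub_le (hx : ‖x‖ ≤ 1) (hy : ‖y‖ = 1) (ht : t ∈ Icc (0 : ℝ) 1) :
    ‖x - y‖ + (1 - t) ≤ 3 * ‖t • x - y‖ := by
  have hxt : ‖x - t • x‖ ≤ 1 - t := by
    rw [show x - t • x = (1 - t) • x by rw [sub_smul, one_smul], norm_smul,
      Real.norm_of_nonneg (sub_nonneg.mpr ht.2)]
    nlinarith [ht.2]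
  have := norm_sub_le_norm_sub_add_norm_sub x (t • x) y
  linarith [one_sub_le_norm_smul_sub hx hy ht.1]

lemma smul_sub_ne_zero (hx : ‖x‖ ≤ 1) (hy : ‖y‖ = 1) (hxy : x ≠ y) (ht : t ∈ Icc (0 : ℝ) 1) :
    t • x - y ≠ 0 := by
  intro h
  have := norm_sub_add_one_sub_le hx hy ht
  rw [h, norm_zero] at this
  linarith [ht.2, norm_pos_iff.mpr (sub_ne_zero.mpr hxy)]

lemma norm_integral_normalize_smul_sub_add_le [CompleteSpace E] (hx : ‖x‖ ≤ 1) (hy : ‖y‖ = 1)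
    (hxy : x ≠ y) :
    ‖(∫ t in (0 : ℝ)..1, normalize (t • x - y)) + y‖ ≤ 4 * √‖x - y‖ := by
  set d := ‖x - y‖
  have hcont : ContinuousOn (fun t : ℝ => normalize (t • x - y)) (uIcc 0 1) := by
    rw [uIcc_of_le zero_le_one]
    refine ContinuousOn.smul (ContinuousOn.inv₀ (by fun_prop) fun t ht => ?_) (by fun_prop)
    exact norm_ne_zero_iff.mpr (smul_sub_ne_zero hx hy hxy ht)
  have hpt : ∀ t ∈ Ioo (0 : ℝ) 1,
      ‖normalize (t • x - y) + y‖ ≤ 2 * √d * (1 - t) ^ (-(1 / 2) : ℝ) := by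
    intro t ht
    have hpos : 0 < 1 - t := sub_pos.mpr ht.2
    have hlow := one_sub_le_norm_smul_sub hx hy ht.1.le
    have hnormalize : normalize ((t - 1) • y) = -y := by
      rw [normalize_smul_of_neg (by linarith [ht.2]), normalize_eq_self_of_norm_eq_one hy]
    have hdiff : ‖(t • x - y) - (t - 1) • y‖ ≤ d := by
      rw [show (t • x - y) - (t - 1) • y = t • (x - y) by module, norm_smul,
        Real.norm_of_nonneg ht.1.le]
      exact mul_le_of_le_one_left (norm_nonneg _) ht.2.le
    calc ‖normalize (t • x - y) + y‖
        = ‖normalize (t • x - y) - normalize ((t - 1) • y)‖ := by rw [hnormalize, sub_neg_eq_add]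
      _ ≤ 2 * √(‖(t • x - y) - (t - 1) • y‖ / ‖t • x - y‖) :=
        norm_normalize_sub_normalize_le_sqrt
          (smul_sub_ne_zero hx hy hxy (Ioo_subset_Icc_self ht)) _
      _ ≤ 2 * √(d / (1 - t)) := by gcongr
      _ = 2 * √d * (1 - t) ^ (-(1 / 2) : ℝ) := by
        rw [Real.sqrt_div' _ hpos.le, Real.rpow_neg hpos.le, ← Real.sqrt_eq_rpow]; ring
  calc ‖(∫ t in (0 : ℝ)..1, normalize (t • x - y)) + y‖
      = ‖∫ t in (0 : ℝ)..1, (normalize (t • x - y) + y)‖ := by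
        rw [intervalIntegral.integral_add hcont.intervalIntegrable intervalIntegrable_const]
        simp
    _ ≤ ∫ t in (0 : ℝ)..1, ‖normalize (t • x - y) + y‖ :=
      intervalIntegral.norm_integral_le_integral_norm zero_le_one
    _ ≤ ∫ t in (0 : ℝ)..1, 2 * √d * (1 - t) ^ (-(1 / 2) : ℝ) :=
      intervalIntegral.integral_mono_on_of_le_Ioo zero_le_one
        (hcont.add continuousOn_const).norm.intervalIntegrable
        (intervalIntegrable_one_sub_rpow_neg_half.const_mul _) hpt
    _ = 4 * √d := by
      rw [intervalIntegral.integral_const_mul, integral_one_sub_rpow_neg_half]; ring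

lemma sub_two_mul_norm_integral_le (hx : ‖x‖ ≤ 1) (hy : ‖y‖ = 1) (hxy : x ≠ y) {k : ℕ}
    (hk : 2 ≤ k) :
    ((k : ℝ) - 2) * ‖∫ t in (0 : ℝ)..1, (‖t • x - y‖ ^ k)⁻¹ • (t • x - y)‖ ≤
      3 ^ (k - 1) * (‖x - y‖ ^ (k - 2))⁻¹ := by
  set d := ‖x - y‖ with hd_def
  have hd : 0 < d := norm_pos_iff.mpr (sub_ne_zero.mpr hxy)
  have hpt : ∀ t ∈ Icc (0 : ℝ) 1,
      ‖(‖t • x - y‖ ^ k)⁻¹ • (t • x - y)‖ ≤ 3 ^ (k - 1) * ((d + 1 - t) ^ (k - 1))⁻¹ := by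
    intro t ht
    have hlow := norm_sub_add_one_sub_le hx hy ht
    rw [← hd_def] at hlow
    rw [norm_inv_norm_pow_smul (smul_sub_ne_zero hx hy hxy ht) (by omega), ← inv_pow,
      ← inv_pow, ← mul_pow, ← div_eq_mul_inv]
    have hpos : 0 < d + 1 - t := by linarith [ht.2]
    gcongr
    rw [inv_eq_one_div, div_le_div_iff₀ (norm_pos_iff.mpr (smul_sub_ne_zero hx hy hxy ht)) hpos]
    linarith
  have hcont :
      ContinuousOn (fun t : ℝ => 3 ^ (k - 1) * ((d + 1 - t) ^ (k - 1))⁻¹) (uIcc 0 1) := by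
    rw [uIcc_of_le zero_le_one]
    exact continuousOn_const.mul
      (ContinuousOn.inv₀ (by fun_prop) fun t ht => pow_ne_zero _ (by linarith [ht.2]))
  have hsubst :
      ∫ t in (0 : ℝ)..1, ((d + 1 - t) ^ (k - 1))⁻¹ = ∫ s in d..d + 1, (s ^ (k - 1))⁻¹ := by
    simpa using intervalIntegral.integral_comp_sub_left (a := 0) (b := 1)
      (fun s : ℝ => (s ^ (k - 1))⁻¹) (d + 1)
  have hcoef : ((k : ℝ) - 2) = ((k - 1 : ℕ) : ℝ) - 1 := by
    rw [Nat.cast_sub (by omega)]; ring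
  have hk2 : k - 2 = k - 1 - 1 := by omega
  calc ((k : ℝ) - 2) * ‖∫ t in (0 : ℝ)..1, (‖t • x - y‖ ^ k)⁻¹ • (t • x - y)‖
      ≤ ((k : ℝ) - 2) * ∫ t in (0 : ℝ)..1, 3 ^ (k - 1) * ((d + 1 - t) ^ (k - 1))⁻¹ := by
        gcongr
        · have : (2 : ℝ) ≤ k := by exact_mod_cast hk
          linarith
        exact intervalIntegral.norm_integral_le_of_norm_le zero_le_one
          (ae_of_all _ fun t ht => hpt t (Ioc_subset_Icc_self ht)) hcont.intervalIntegrable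
    _ = 3 ^ (k - 1) * ((((k - 1 : ℕ) : ℝ) - 1) * ∫ s in d..d + 1, (s ^ (k - 1))⁻¹) := by
        rw [intervalIntegral.integral_const_mul, hsubst, hcoef]; ring
    _ ≤ 3 ^ (k - 1) * (d ^ (k - 2))⁻¹ := by
        rw [hk2]
        gcongr
        exact sub_one_mul_integral_inv_pow_le hd (by linarith) (by omega)

end NormedSpace

section Brendle

variable {n : ℕ} {x y : EuclideanSpace ℝ (Fin n)}

lemma brendleY_add_eq (k : ℕ) :
    brendleY n k y x + (‖x - y‖ ^ k)⁻¹ • (x - y) =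
      (2 : ℝ)⁻¹ • x -
        (((k : ℝ) - 2) / 2) • ∫ t in (0 : ℝ)..1, (‖t • x - y‖ ^ k)⁻¹ • (t • x - y) := by
  rw [brendleY]; abel

lemma norm_brendleY_one_add_le (hx : ‖x‖ ≤ 1) (hy : ‖y‖ = 1) (hxy : x ≠ y) :
    ‖brendleY n 1 y x + (‖x - y‖ ^ 1)⁻¹ • (x - y)‖ ≤ 3 * √‖x - y‖ := by
  have hsplit : brendleY n 1 y x + (‖x - y‖ ^ 1)⁻¹ • (x - y) =
      (2 : ℝ)⁻¹ • ((x - y) + ((∫ t in (0 : ℝ)..1, normalize (t • x - y)) + y)) := by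
    rw [brendleY_add_eq]
    simp only [pow_one, Nat.cast_one]
    change _ - _ • ∫ t in (0 : ℝ)..1, normalize (t • x - y) = _
    module
  have hsqrt : ‖x - y‖ ≤ 2 * √‖x - y‖ :=
    le_two_mul_sqrt (norm_nonneg _) (by linarith [norm_sub_le_two hx hy.le])
  rw [hsplit, norm_smul, norm_inv, Real.norm_two]
  linarith [norm_add_le (x - y) ((∫ t in (0 : ℝ)..1, normalize (t • x - y)) + y),
    norm_integral_normalize_smul_sub_add_le hx hy hxy]

lemma norm_brendleY_add_mul_pow_le (hx : ‖x‖ ≤ 1) (hy : ‖y‖ = 1) (hxy : x ≠ y) {k : ℕ}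
    (hk : 2 ≤ k) :
    ‖brendleY n k y x + (‖x - y‖ ^ k)⁻¹ • (x - y)‖ * ‖x - y‖ ^ (k - 1) ≤
      3 ^ (k - 1) * ‖x - y‖ := by
  set d := ‖x - y‖
  have hd : 0 < d := norm_pos_iff.mpr (sub_ne_zero.mpr hxy)
  have hd2 : d ≤ 2 := norm_sub_le_two hx hy.le
  have hcoef : 0 ≤ ((k : ℝ) - 2) / 2 := by
    have : (2 : ℝ) ≤ k := by exact_mod_cast hk
    linarith
  have hnorm : ‖brendleY n k y x + (‖x - y‖ ^ k)⁻¹ • (x - y)‖ ≤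
      2⁻¹ + 2⁻¹ * (3 ^ (k - 1) * (d ^ (k - 2))⁻¹) := by
    rw [brendleY_add_eq]
    refine (norm_sub_le _ _).trans ?_
    rw [norm_smul, norm_smul, Real.norm_of_nonneg hcoef, norm_inv, Real.norm_two, div_eq_inv_mul,
      mul_assoc]
    linarith [sub_two_mul_norm_integral_le hx hy hxy hk]
  have hpow : d ^ (k - 1) = d ^ (k - 2) * d := by
    rw [← pow_succ]; congr 1; omega
  have hpow_le : d ^ (k - 2) ≤ 3 ^ (k - 1) :=
    calc d ^ (k - 2) ≤ 3 ^ (k - 2) := by gcongr; linarith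
      _ ≤ 3 ^ (k - 1) := pow_le_pow_right₀ (by norm_num) (by omega)
  have hdk : 0 < d ^ (k - 2) := by positivity
  calc ‖brendleY n k y x + (‖x - y‖ ^ k)⁻¹ • (x - y)‖ * d ^ (k - 1)
      ≤ (2⁻¹ + 2⁻¹ * (3 ^ (k - 1) * (d ^ (k - 2))⁻¹)) * (d ^ (k - 2) * d) := by
        rw [hpow]; gcongr
    _ = 2⁻¹ * d ^ (k - 2) * d + 2⁻¹ * 3 ^ (k - 1) * d := by field_simp
    _ ≤ 3 ^ (k - 1) * d := by nlinarith

end Brendle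

theorem brendleY_error_bound_general (n k : ℕ) (hk : 1 ≤ k) :
    ∃ h : ℝ → ℝ,
      MonotoneOn h (Icc (0 : ℝ) 2) ∧
      (∀ t ∈ Icc (0 : ℝ) 2, 0 ≤ h t) ∧
      Tendsto h (nhdsWithin 0 (Ioi 0)) (nhds 0) ∧
      ∀ y : EuclideanSpace ℝ (Fin n), ‖y‖ = 1 →
        ∀ x ∈ closedBall (0 : EuclideanSpace ℝ (Fin n)) 1, x ≠ y →
          ‖brendleY n k y x + (‖x - y‖ ^ k)⁻¹ • (x - y)‖ ≤
            h ‖x - y‖ / ‖x - y‖ ^ (k - 1) := by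
  refine ⟨fun s => 3 ^ k * √s, fun a _ b _ hab => by dsimp only; gcongr,
    fun s _ => by positivity, ?_, ?_⟩
  · simpa using ((Real.continuous_sqrt.tendsto 0).const_mul (3 ^ k : ℝ)).mono_left
      nhdsWithin_le_nhds
  intro y hy x hx hxy
  rw [mem_closedBall_zero_iff] at hx
  obtain rfl | hk2 : k = 1 ∨ 2 ≤ k := by omega
  · simpa using norm_brendleY_one_add_le hx hy hxy
  have hd : 0 < ‖x - y‖ := norm_pos_iff.mpr (sub_ne_zero.mpr hxy)
  have hsqrt : ‖x - y‖ ≤ 2 * √‖x - y‖ :=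
    le_two_mul_sqrt hd.le (by linarith [norm_sub_le_two hx hy.le])
  rw [le_div_iff₀ (by positivity)]
  calc ‖brendleY n k y x + (‖x - y‖ ^ k)⁻¹ • (x - y)‖ * ‖x - y‖ ^ (k - 1)
      ≤ 3 ^ (k - 1) * ‖x - y‖ := norm_brendleY_add_mul_pow_le hx hy hxy hk2
    _ ≤ 3 ^ (k - 1) * (3 * √‖x - y‖) := by
        gcongr 3 ^ (k - 1) * ?_; linarith [Real.sqrt_nonneg ‖x - y‖]
    _ = 3 ^ k * √‖x - y‖ := by rw [← mul_assoc, ← pow_succ, Nat.sub_add_cancel hk]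

/-- Lemma (Brendle, (iii)&(iv)): there is a non-decreasing function `h : [0,2] → [0,∞)` with
`h(t) → 0` as `t → 0⁺`, such that `|Y(x) + (x−y)/|x−y|^k| ≤ h(|x−y|)/|x−y|^{k−1}`
for all `y` on the unit sphere and `x` in the closed unit ball with `x ≠ y`. -/
theorem brendleY_error_bound (n k : ℕ) (hn : 1 ≤ n) (hk : 1 ≤ k) :
    ∃ h : ℝ → ℝ,
      MonotoneOn h (Icc (0 : ℝ) 2) ∧
      (∀ t ∈ Icc (0 : ℝ) 2, 0 ≤ h t) ∧
      Tendsto h (nhdsWithin 0 (Ioi 0)) (nhds 0) ∧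
      ∀ y : EuclideanSpace ℝ (Fin n), ‖y‖ = 1 →
        ∀ x ∈ closedBall (0 : EuclideanSpace ℝ (Fin n)) 1, x ≠ y →
          ‖brendleY n k y x + (‖x - y‖ ^ k)⁻¹ • (x - y)‖ ≤
            h ‖x - y‖ / ‖x - y‖ ^ (k - 1) :=
  brendleY_error_bound_general n k hk
end

section
/- Let n ≥ 1 and let y ∈ ℝⁿ with |y| = 1. Then ∫₀¹ (t·x − y)/|t·x − y| dt → −y as x → y with x ranging over the closed unit ball. Consequently, for k = 1 Brendle's vector field satisfies Y(x) + (x−y)/|x−y| = x/2 + (1/2)·∫₀¹ (t·x − y)/|t·x − y| dt → 0 as x → y within the closed unit ball. -/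
open Metric Set Filter

/-!
For `t < 1` the integrand `(t·x − y)/|t·x − y|` is continuous in `x` at `x = y`, where it equals
`(t − 1)·y / |(t − 1)·y| = −y/|y|`; since it has norm at most `1`, dominated convergence gives
`∫₀¹ (t·x − y)/|t·x − y| dt → −y/|y|` as `x → y`. For `k = 1` the coefficient `(k − 2)/2` of the
integral in `Y` is `−1/2`, so `Y(x) + (x − y)/|x − y| → y/2 − y/2 = 0`.
-/

open Topology MeasureTheory

section Normalize

variable {E : Type*} [NormedAddCommGroup E] [NormedSpace ℝ E]

theorem norm_inv_norm_smul_le_one (v : E) : ‖‖v‖⁻¹ • v‖ ≤ 1 := by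
  rw [norm_smul, norm_inv, norm_norm]
  exact inv_mul_le_one_of_le₀ le_rfl (norm_nonneg v)

theorem inv_norm_smul_smul_of_neg {c : ℝ} (hc : c < 0) (v : E) :
    ‖c • v‖⁻¹ • (c • v) = -(‖v‖⁻¹ • v) := by
  rw [norm_smul, Real.norm_of_nonpos hc.le, smul_smul, ← neg_smul, mul_inv, inv_neg]
  congr 1
  rw [neg_mul, mul_comm, mul_neg, ← mul_assoc, mul_inv_cancel₀ hc.ne, one_mul]

theorem tendsto_inv_norm_smul_sub_nhds {y : E} (hy : y ≠ 0) {t : ℝ} (ht : t < 1) :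
    Tendsto (fun x : E => ‖t • x - y‖⁻¹ • (t • x - y)) (𝓝 y) (𝓝 (-(‖y‖⁻¹ • y))) := by
  have hty : t • y - y = (t - 1) • y := by rw [sub_smul, one_smul]
  have hne : (t - 1) • y ≠ 0 := smul_ne_zero (sub_ne_zero.2 ht.ne) hy
  have hcont : ContinuousAt (fun v : E => ‖v‖⁻¹ • v) ((t - 1) • y) :=
    (continuousAt_id.norm.inv₀ (norm_ne_zero_iff.2 hne)).smul continuousAt_id
  have hlin : Tendsto (fun x : E => t • x - y) (𝓝 y) (𝓝 ((t - 1) • y)) := by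
    rw [← hty]
    exact ((continuous_const_smul t).sub continuous_const).tendsto y
  rw [← inv_norm_smul_smul_of_neg (sub_neg.2 ht) y]
  exact hcont.tendsto.comp hlin

variable [CompleteSpace E]

theorem tendsto_integral_inv_norm_smul_sub_nhds {y : E} (hy : y ≠ 0) :
    Tendsto (fun x : E => ∫ t in (0 : ℝ)..1, ‖t • x - y‖⁻¹ • (t • x - y)) (𝓝 y)
      (𝓝 (-(‖y‖⁻¹ • y))) := by
  have hlim := intervalIntegral.tendsto_integral_filter_of_dominated_convergence
    (μ := volume) (a := 0) (b := 1) (f := fun _ => -(‖y‖⁻¹ • y))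
    (F := fun (x : E) (t : ℝ) => ‖t • x - y‖⁻¹ • (t • x - y)) (fun _ => 1)
    (Eventually.of_forall fun x => by fun_prop)
    (Eventually.of_forall fun x => Eventually.of_forall fun t _ => norm_inv_norm_smul_le_one _)
    intervalIntegrable_const
    (by
      filter_upwards [Measure.ae_ne volume (1 : ℝ)] with t ht hmem
      rw [uIoc_of_le zero_le_one] at hmem
      exact tendsto_inv_norm_smul_sub_nhds hy (hmem.2.lt_of_ne ht))
  simpa using hlim

end Normalize

theorem brendleY_one_add_inv_norm_smul (n : ℕ) (y x : EuclideanSpace ℝ (Fin n)) :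
    brendleY n 1 y x + (‖x - y‖ ^ 1)⁻¹ • (x - y) =
      (2 : ℝ)⁻¹ • x + (2 : ℝ)⁻¹ • ∫ t in (0 : ℝ)..1, (‖t • x - y‖)⁻¹ • (t • x - y) := by
  simp only [brendleY, pow_one, Nat.cast_one]
  rw [show ((1 : ℝ) - 2) / 2 = -(2 : ℝ)⁻¹ by norm_num]
  module

theorem brendleY_k_one_limit_general (n : ℕ)
    (y : EuclideanSpace ℝ (Fin n)) (hy : ‖y‖ = 1) :
    Tendsto (fun x : EuclideanSpace ℝ (Fin n) =>
        ∫ t in (0 : ℝ)..1, (‖t • x - y‖)⁻¹ • (t • x - y))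
      (nhdsWithin y (closedBall (0 : EuclideanSpace ℝ (Fin n)) 1 \ {y}))
      (nhds (-y)) ∧
    (∀ x ∈ closedBall (0 : EuclideanSpace ℝ (Fin n)) 1, x ≠ y →
        brendleY n 1 y x + (‖x - y‖ ^ 1)⁻¹ • (x - y) =
          (2 : ℝ)⁻¹ • x +
            (2 : ℝ)⁻¹ • ∫ t in (0 : ℝ)..1, (‖t • x - y‖)⁻¹ • (t • x - y)) ∧
    Tendsto (fun x : EuclideanSpace ℝ (Fin n) =>
        brendleY n 1 y x + (‖x - y‖ ^ 1)⁻¹ • (x - y))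
      (nhdsWithin y (closedBall (0 : EuclideanSpace ℝ (Fin n)) 1 \ {y}))
      (nhds 0) := by
  have hy0 : y ≠ 0 := norm_ne_zero_iff.1 (by rw [hy]; exact one_ne_zero)
  have hint : Tendsto (fun x : EuclideanSpace ℝ (Fin n) =>
      ∫ t in (0 : ℝ)..1, (‖t • x - y‖)⁻¹ • (t • x - y)) (𝓝 y) (𝓝 (-y)) := by
    simpa [hy] using tendsto_integral_inv_norm_smul_sub_nhds hy0
  refine ⟨hint.mono_left nhdsWithin_le_nhds,
    fun x _ _ => brendleY_one_add_inv_norm_smul n y x, ?_⟩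
  have hsum := (tendsto_id.const_smul (2 : ℝ)⁻¹).add (hint.const_smul (2 : ℝ)⁻¹)
  rw [smul_neg, add_neg_cancel] at hsum
  simp only [brendleY_one_add_inv_norm_smul]
  exact hsum.mono_left nhdsWithin_le_nhds

/-- The case `k = 1`: `∫₀¹ (t·x − y)/|t·x − y| dt → −y` as `x → y` in the closed unit ball,
`Y(x) + (x−y)/|x−y| = x/2 + (1/2)·∫₀¹ (t·x − y)/|t·x − y| dt`, and consequently
`Y(x) + (x−y)/|x−y| → 0` as `x → y` in the closed unit ball. -/
theorem brendleY_k_one_limit (n : ℕ) (hn : 1 ≤ n)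
    (y : EuclideanSpace ℝ (Fin n)) (hy : ‖y‖ = 1) :
    Tendsto (fun x : EuclideanSpace ℝ (Fin n) =>
        ∫ t in (0 : ℝ)..1, (‖t • x - y‖)⁻¹ • (t • x - y))
      (nhdsWithin y (closedBall (0 : EuclideanSpace ℝ (Fin n)) 1 \ {y}))
      (nhds (-y)) ∧
    (∀ x ∈ closedBall (0 : EuclideanSpace ℝ (Fin n)) 1, x ≠ y →
        brendleY n 1 y x + (‖x - y‖ ^ 1)⁻¹ • (x - y) =
          (2 : ℝ)⁻¹ • x +
            (2 : ℝ)⁻¹ • ∫ t in (0 : ℝ)..1, (‖t • x - y‖)⁻¹ • (t • x - y)) ∧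
    Tendsto (fun x : EuclideanSpace ℝ (Fin n) =>
        brendleY n 1 y x + (‖x - y‖ ^ 1)⁻¹ • (x - y))
      (nhdsWithin y (closedBall (0 : EuclideanSpace ℝ (Fin n)) 1 \ {y}))
      (nhds 0) :=
  brendleY_k_one_limit_general n y hy
end

section
/- Let K, K₁ ∈ ℝ with K ≤ K₁ and K₁ > 0. Then for every r with 0 ≤ r ≤ π/(2√K₁) one has 0 ≤ sn_{K₁}(r) ≤ sn_K(r), where sn_K is the generalized sine function of curvature K. -/
open Real

/-- The generalized sine function `sn_K` of the space form of curvature `K`. -/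
noncomputable def sn (K r : ℝ) : ℝ :=
  if 0 < K then Real.sin (r * Real.sqrt K) / Real.sqrt K
  else if K = 0 then r
  else Real.sinh (r * Real.sqrt (-K)) / Real.sqrt (-K)

lemma aux_sin_slope {s t : ℝ} (hs : 0 < s) (hst : s ≤ t) (htpi : t ≤ π) :
    s * Real.sin t ≤ t * Real.sin s := by
  have ht : 0 < t := hs.trans_le hst
  have key := strictConcaveOn_sin_Icc.concaveOn.2
    (show (0:ℝ) ∈ Set.Icc 0 π from ⟨le_rfl, Real.pi_pos.le⟩)
    (show t ∈ Set.Icc 0 π from ⟨ht.le, htpi⟩)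
    (show (0:ℝ) ≤ 1 - s / t by
      have : s / t ≤ 1 := div_le_one_of_le₀ hst ht.le
      linarith)
    (show (0:ℝ) ≤ s / t from div_nonneg hs.le ht.le)
    (by ring)
  simp only [smul_eq_mul, mul_zero, zero_add, Real.sin_zero] at key
  have hs' : s / t * t = s := div_mul_cancel₀ s ht.ne'
  rw [hs'] at key
  have h2 : s / t * Real.sin t ≤ Real.sin s := by linarith
  have h3 : (s / t * Real.sin t) * t ≤ Real.sin s * t :=
    mul_le_mul_of_nonneg_right h2 ht.le
  have h4 : (s / t * Real.sin t) * t = s * Real.sin t := by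
    field_simp
  linarith

/-- If `K ≤ K₁` with `K₁ > 0`, then `0 ≤ sn_{K₁}(r) ≤ sn_K(r)` for `0 ≤ r ≤ π/(2√K₁)`. -/
theorem sn_le_sn (K K₁ : ℝ) (hKK : K ≤ K₁) (hK₁ : 0 < K₁) (r : ℝ)
    (hr : r ∈ Set.Icc (0 : ℝ) (Real.pi / (2 * Real.sqrt K₁))) :
    0 ≤ sn K₁ r ∧ sn K₁ r ≤ sn K r := by
  obtain ⟨hr0, hr1⟩ := hr
  have hsK₁ : 0 < Real.sqrt K₁ := Real.sqrt_pos.2 hK₁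
  set t := r * Real.sqrt K₁ with ht_def
  have ht0 : 0 ≤ t := mul_nonneg hr0 hsK₁.le
  have htpi2 : t ≤ π / 2 := by
    rw [div_mul_eq_div_div] at hr1
    calc t = r * Real.sqrt K₁ := rfl
      _ ≤ (π / 2 / Real.sqrt K₁) * Real.sqrt K₁ :=
          mul_le_mul_of_nonneg_right hr1 hsK₁.le
      _ = π / 2 := div_mul_cancel₀ _ hsK₁.ne'
  have htpi : t ≤ π := htpi2.trans (half_le_self Real.pi_pos.le)
  have hsin0 : 0 ≤ Real.sin t := Real.sin_nonneg_of_nonneg_of_le_pi ht0 htpi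
  have hsn₁ : sn K₁ r = Real.sin t / Real.sqrt K₁ := by simp [sn, hK₁, ht_def]
  have h0 : 0 ≤ sn K₁ r := by rw [hsn₁]; positivity
  refine ⟨h0, ?_⟩
  have hle_r : sn K₁ r ≤ r := by
    rw [hsn₁, div_le_iff₀ hsK₁]
    exact Real.sin_le ht0
  rcases lt_trichotomy K 0 with hK | hK | hK
  · -- K < 0
    have hnK : 0 < Real.sqrt (-K) := Real.sqrt_pos.2 (by linarith)
    have hsnK : sn K r = Real.sinh (r * Real.sqrt (-K)) / Real.sqrt (-K) := by
      simp [sn, hK.not_gt, hK.ne]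
    rw [hsnK]
    refine hle_r.trans ?_
    rw [le_div_iff₀ hnK]
    exact Real.self_le_sinh_iff.2 (mul_nonneg hr0 hnK.le)
  · -- K = 0
    have : sn K r = r := by simp [sn, hK]
    rw [this]; exact hle_r
  · -- K > 0
    have hsK : 0 < Real.sqrt K := Real.sqrt_pos.2 hK
    have hsnK : sn K r = Real.sin (r * Real.sqrt K) / Real.sqrt K := by simp [sn, hK]
    rw [hsnK, hsn₁]
    rcases eq_or_lt_of_le hr0 with h | hrpos
    · rw [ht_def, ← h]; simp
    set s := r * Real.sqrt K with hs_def
    have hs0 : 0 < s := mul_pos hrpos hsK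
    have hst : s ≤ t := by
      rw [hs_def, ht_def]
      exact mul_le_mul_of_nonneg_left (Real.sqrt_le_sqrt hKK) hrpos.le
    have key := aux_sin_slope hs0 hst htpi
    rw [div_le_div_iff₀ hsK₁ hsK]
    rw [hs_def, ht_def] at key
    nlinarith
end
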